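/- Correctness of label dominance with respect to remaining fuel (justifying Definition 1, condition (ii)): let x be a plan that is feasible for initial fuel q, and let q' satisfy q ≤ q' ≤ Q. Then there exists a plan x' that is feasible for initial fuel q' such that 0 ≤ x' i ≤ x i for every i. Consequently cost x' ≤ cost x (since all prices are nonnegative), and every refuelling stop of x' is a refuelling stop of x, so x' uses no more refuelling stops than x. -/

import Mathlib

/-- Fuel level recursion on ℕ: level 0 is the initial fuel `q0`, and the level after
stop `i` is the previous level plus the refuel amount `x i` minus the consumption `d i`. -/
noncomputable def fuelNat (q0 : ℝ) (d x : ℕ → ℝ) : ℕ → ℝ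
  | 0 => q0
  | i + 1 => fuelNat q0 d x i + x i - d i

/-- Fuel levels `f : Fin (n+1) → ℝ` of a plan `x : Fin n → ℝ` with consumptions `d`,
initial fuel `q0`: `f 0 = q0` and `f (i+1) = f i + x i - d i`. -/
noncomputable def fuel {n : ℕ} (q0 : ℝ) (d x : Fin n → ℝ) (i : Fin (n + 1)) : ℝ :=
  fuelNat q0 (fun j => if h : j < n then d ⟨j, h⟩ else 0)
    (fun j => if h : j < n then x ⟨j, h⟩ else 0) i

/-- A plan `x` is feasible (for tank capacity `Q` and initial fuel `q0`) if for every stop `i`: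
`x i ≥ 0`, `f i + x i ≤ Q`, and `f (i+1) ≥ 0`. -/
def Feasible {n : ℕ} (Q q0 : ℝ) (d x : Fin n → ℝ) : Prop :=
  ∀ i : Fin n, 0 ≤ x i ∧ fuel q0 d x i.castSucc + x i ≤ Q ∧ 0 ≤ fuel q0 d x i.succ

/-- Cost of a plan: `Σ_i (c i) * (x i)`. -/
noncomputable def cost {n : ℕ} (c x : Fin n → ℝ) : ℝ := ∑ i, c i * x i

/-!
Let `a = q' - q` and let `X i` be the total amount `x` buys before stop `i`. The plan `x'` whose
cumulative purchase is `(X i - a)⁺` skips exactly the first `a` units that `x` buys, so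
`0 ≤ x' i ≤ x i`. Its fuel level at stop `i` is `max (f i) (q' - D i)`, where `f` is the fuel level
of `x` and `D i` the consumption before stop `i`. The first term keeps it nonnegative, and since
`q' ≤ Q` and `x` never overfills, it never exceeds `Q` either.
-/

open Fin

section TrimPlan

variable {n : ℕ}

theorem fuel_succ (q0 : ℝ) (d x : Fin n → ℝ) (i : Fin n) :
    fuel q0 d x i.succ = fuel q0 d x i.castSucc + x i - d i := by
  simp [fuel, fuelNat, i.isLt]

theorem fuel_eq_add_partialSum_sub (q0 : ℝ) (d x : Fin n → ℝ) (i : Fin (n + 1)) :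
    fuel q0 d x i = q0 + partialSum x i - partialSum d i := by
  induction i using Fin.induction with
  | zero => simp [fuel, fuelNat]
  | succ i ih => rw [fuel_succ, ih, partialSum_succ, partialSum_succ]; ring

theorem partialSum_nonneg {d : Fin n → ℝ} (hd : ∀ i, 0 ≤ d i) (i : Fin (n + 1)) :
    0 ≤ partialSum d i := by
  induction i using Fin.induction with
  | zero => simp
  | succ i ih => rw [partialSum_succ]; linarith [hd i]

theorem cost_mono {c x' x : Fin n → ℝ} (hc : ∀ i, 0 ≤ c i) (h : ∀ i, x' i ≤ x i) :
    cost c x' ≤ cost c x :=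
  Finset.sum_le_sum fun i _ => mul_le_mul_of_nonneg_left (h i) (hc i)

noncomputable def trimPlan (a : ℝ) (x : Fin n → ℝ) (i : Fin n) : ℝ :=
  max (partialSum x i.succ - a) 0 - max (partialSum x i.castSucc - a) 0

variable {a : ℝ} {x : Fin n → ℝ}

theorem trimPlan_nonneg {i : Fin n} (hxi : 0 ≤ x i) : 0 ≤ trimPlan a x i := by
  rw [trimPlan, partialSum_succ, sub_nonneg]
  exact max_le_max (by linarith) le_rfl

theorem trimPlan_le {i : Fin n} (hxi : 0 ≤ x i) : trimPlan a x i ≤ x i := by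
  rw [trimPlan, partialSum_succ, sub_le_iff_le_add]
  exact max_le (by linarith [le_max_left (partialSum x i.castSucc - a) 0]) (by positivity)

theorem partialSum_trimPlan (ha : 0 ≤ a) (i : Fin (n + 1)) :
    partialSum (trimPlan a x) i = max (partialSum x i - a) 0 := by
  induction i using Fin.induction with
  | zero => simpa using ha
  | succ i ih => rw [partialSum_succ, ih, trimPlan]; ring

theorem fuel_trimPlan (q : ℝ) (d : Fin n → ℝ) (ha : 0 ≤ a) (i : Fin (n + 1)) :
    fuel (q + a) d (trimPlan a x) i = max (fuel q d x i) (q + a - partialSum d i) := by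
  rw [fuel_eq_add_partialSum_sub, fuel_eq_add_partialSum_sub, partialSum_trimPlan ha,
    ← max_add_add_left, max_sub_sub_right]
  ring_nf

theorem feasible_trimPlan {Q q : ℝ} {d : Fin n → ℝ} (hx : Feasible Q q d x)
    (hd : ∀ i, 0 ≤ d i) (ha : 0 ≤ a) (hqa : q + a ≤ Q) :
    Feasible Q (q + a) d (trimPlan a x) := by
  intro i
  obtain ⟨hxi, hcap, hreach⟩ := hx i
  refine ⟨trimPlan_nonneg hxi, ?_, ?_⟩
  · have hstep : fuel (q + a) d (trimPlan a x) i.castSucc + trimPlan a x i =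
        fuel (q + a) d (trimPlan a x) i.succ + d i := by
      rw [fuel_succ]; ring
    have hD := partialSum_nonneg hd i.castSucc
    rw [hstep, fuel_trimPlan q d ha, fuel_succ, partialSum_succ, ← max_add_add_right]
    exact max_le (by linarith) (by linarith)
  · rw [fuel_trimPlan q d ha]
    exact le_max_of_le_left hreach

end TrimPlan

theorem dominance_more_fuel_general {n : ℕ} (Q : ℝ) (d c : Fin n → ℝ)
    (hd : ∀ i, 0 ≤ d i ∧ d i ≤ Q) (hc : ∀ i, 0 ≤ c i)
    (q q' : ℝ) (hqq' : q ≤ q') (hq' : q' ≤ Q)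
    (x : Fin n → ℝ) (hx : Feasible Q q d x) :
    ∃ x' : Fin n → ℝ, Feasible Q q' d x' ∧
      (∀ i, 0 ≤ x' i ∧ x' i ≤ x i) ∧
      cost c x' ≤ cost c x ∧
      (∀ i, 0 < x' i → 0 < x i) ∧
      {i : Fin n | 0 < x' i}.ncard ≤ {i : Fin n | 0 < x i}.ncard := by
  have hle : ∀ i, trimPlan (q' - q) x i ≤ x i := fun i => trimPlan_le (hx i).1
  have hsupp : {i | 0 < trimPlan (q' - q) x i} ⊆ {i | 0 < x i} := fun i h => h.trans_le (hle i)
  refine ⟨trimPlan (q' - q) x, ?_, fun i => ⟨trimPlan_nonneg (hx i).1, hle i⟩,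
    cost_mono hc hle, hsupp, Set.ncard_le_ncard hsupp⟩
  simpa using feasible_trimPlan hx (fun i => (hd i).1) (sub_nonneg.2 hqq') (by linarith)

/-- dominance w.r.t. remaining fuel: if `x` is feasible for initial fuel `q`
and `q ≤ q' ≤ Q`, then there is a plan `x'` feasible for initial fuel `q'` with
`0 ≤ x' i ≤ x i` for every `i`; consequently `cost x' ≤ cost x`, every refuelling stop of
`x'` is one of `x`, and `x'` uses no more refuelling stops than `x`. -/
theorem dominance_more_fuel {n : ℕ} (Q : ℝ) (hQ : 0 < Q) (d c : Fin n → ℝ)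
    (hd : ∀ i, 0 ≤ d i ∧ d i ≤ Q) (hc : ∀ i, 0 ≤ c i)
    (q q' : ℝ) (hq : 0 ≤ q) (hqq' : q ≤ q') (hq' : q' ≤ Q)
    (x : Fin n → ℝ) (hx : Feasible Q q d x) :
    ∃ x' : Fin n → ℝ, Feasible Q q' d x' ∧
      (∀ i, 0 ≤ x' i ∧ x' i ≤ x i) ∧
      cost c x' ≤ cost c x ∧
      (∀ i, 0 < x' i → 0 < x i) ∧
      {i : Fin n | 0 < x' i}.ncard ≤ {i : Fin n | 0 < x i}.ncard :=
  dominance_more_fuel_general Q d c hd hc q q' hqq' hq' x hx
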